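/- Let 0 < C ≤ 1 and let j_i : Y → X_i (i ∈ I) be a family of nonexpansive, C-expansive maps between complete extended metric spaces. Then the glued space ⊔_Y X_i (the metric quotient of the disjoint union under the gluing pseudodistance D) is a complete extended metric space. -/

import Mathlib

/-!
A Cauchy sequence in the glued space either comes arbitrarily close to the image of `Y`, or
eventually stays a fixed distance `r > 0` away from it. In the first case it is shadowed by a
Cauchy sequence in the image of `Y`, which is complete since `ι` is nonexpansive and
`C`-expansive on the complete space `Y`. In the second case a chain of length `< r` starting at
a far point cannot pass through `Y`, so it stays in a single summand; hence the tail of the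
sequence lies in one `X i`, where its distances are bounded by the glued ones, and it converges
there.
-/

open ENNReal NNReal

/-- The gluing pseudodistance on the disjoint union `Σ i, X i` associated to a family of maps
`j i : Y → X i`: the infimum of `∑ s, d (p s) (q s)` over all finite chains
`p 0 = a, q 0, p 1, q 1, …, p n, q n = b` in which each pair `p s, q s` lies in a single
summand `X (idx s)` and consecutive points `q s`, `p (s+1)` are images of a common point of
`Y` under the corresponding `j`. -/
noncomputable def glueDist {I Y : Type*} {X : I → Type*} [∀ i, EMetricSpace (X i)]
    (j : ∀ i, Y → X i) (a b : Σ i, X i) : ℝ≥0∞ :=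
  sInf {L : ℝ≥0∞ | ∃ (n : ℕ) (idx : Fin (n + 1) → I) (p q : ∀ s, X (idx s)),
    (⟨idx 0, p 0⟩ : Σ i, X i) = a ∧ (⟨idx (Fin.last n), q (Fin.last n)⟩ : Σ i, X i) = b ∧
    (∀ s : Fin n, ∃ y : Y,
      q s.castSucc = j (idx s.castSucc) y ∧ p s.succ = j (idx s.succ) y) ∧
    L = ∑ s, edist (p s) (q s)}

open Filter Topology Set

theorem IsComplete.exists_tendsto_of_frequently_edist_lt {α : Type*} [PseudoEMetricSpace α]
    {S : Set α} (hS : IsComplete S) {u : ℕ → α} (hu : CauchySeq u)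
    (hnear : ∀ ε > 0, ∃ᶠ n in atTop, ∃ s ∈ S, edist (u n) s < ε) :
    ∃ a, Tendsto u atTop (𝓝 a) := by
  have hshadow : ∀ ε > 0, ∃ s ∈ S, ∀ᶠ n in atTop, edist (u n) s < ε := by
    intro ε hε
    have hε2 : 0 < ε / 2 := ENNReal.half_pos hε.ne'
    obtain ⟨N, hN⟩ := EMetric.cauchySeq_iff.1 hu _ hε2
    obtain ⟨n, hn, s, hs, hns⟩ := frequently_atTop.1 (hnear _ hε2) N
    refine ⟨s, hs, eventually_atTop.2 ⟨N, fun m hm => ?_⟩⟩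
    calc edist (u m) s ≤ edist (u m) (u n) + edist (u n) s := edist_triangle _ _ _
      _ < ε / 2 + ε / 2 := ENNReal.add_lt_add (hN m hm n hn) hns
      _ = ε := ENNReal.add_halves ε
  choose s hsS hs using fun k : ℕ => hshadow (k : ℝ≥0∞)⁻¹ (by simp)
  have hsmall : ∀ δ > 0, ∀ᶠ k : ℕ in atTop, (k : ℝ≥0∞)⁻¹ < δ := fun δ hδ =>
    ENNReal.tendsto_inv_nat_nhds_zero.eventually (gt_mem_nhds hδ)
  have hsCauchy : CauchySeq s := by
    refine EMetric.cauchySeq_iff.2 fun δ hδ => ?_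
    obtain ⟨K, hK⟩ := eventually_atTop.1 (hsmall _ (ENNReal.half_pos hδ.ne'))
    refine ⟨K, fun k hk l hl => ?_⟩
    obtain ⟨n, hnk, hnl⟩ := ((hs k).and (hs l)).exists
    calc edist (s k) (s l) ≤ edist (u n) (s k) + edist (u n) (s l) :=
          edist_triangle_left _ _ _
      _ < δ / 2 + δ / 2 := ENNReal.add_lt_add (hnk.trans (hK k hk)) (hnl.trans (hK l hl))
      _ = δ := ENNReal.add_halves δ
  obtain ⟨a, -, ha⟩ := cauchySeq_tendsto_of_isComplete hS hsS hsCauchy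
  refine ⟨a, EMetric.tendsto_nhds.2 fun δ hδ => ?_⟩
  have hδ2 : 0 < δ / 2 := ENNReal.half_pos hδ.ne'
  obtain ⟨k, hk, hka⟩ := ((hsmall _ hδ2).and (EMetric.tendsto_nhds.1 ha _ hδ2)).exists
  filter_upwards [hs k] with n hn
  calc edist (u n) a ≤ edist (u n) (s k) + edist (s k) a := edist_triangle _ _ _
    _ < δ / 2 + δ / 2 := ENNReal.add_lt_add (hn.trans hk) hka
    _ = δ := ENNReal.add_halves δ

section GlueChain

variable {I Y : Type*} {X : I → Type*} [∀ i, EMetricSpace (X i)] (j : ∀ i, Y → X i)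

inductive GlueChain : (Σ i, X i) → (Σ i, X i) → ℝ≥0∞ → Prop
  | single (i : I) (x x' : X i) : GlueChain ⟨i, x⟩ ⟨i, x'⟩ (edist x x')
  | cons (i : I) (x : X i) (y : Y) {i' : I} {b : Σ i, X i} {L : ℝ≥0∞}
      (h : GlueChain ⟨i', j i' y⟩ b L) : GlueChain ⟨i, x⟩ b (edist x (j i y) + L)

variable {j}

theorem GlueChain.of_fin : ∀ (n : ℕ) (idx : Fin (n + 1) → I) (p q : ∀ s, X (idx s)),
    (∀ s : Fin n, ∃ y : Y,
      q s.castSucc = j (idx s.castSucc) y ∧ p s.succ = j (idx s.succ) y) →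
    GlueChain j ⟨idx 0, p 0⟩ ⟨idx (Fin.last n), q (Fin.last n)⟩ (∑ s, edist (p s) (q s))
  | 0, idx, p, q, _ => by simpa using GlueChain.single (idx 0) (p 0) (q 0)
  | n + 1, idx, p, q, hlink => by
    obtain ⟨y, hq, hp⟩ := hlink 0
    have tail := of_fin n (fun s => idx s.succ) (fun s => p s.succ) (fun s => q s.succ)
      fun s => hlink s.succ
    rw [Fin.sum_univ_succ, show q 0 = j (idx 0) y from hq]
    exact .cons (idx 0) (p 0) y (hp ▸ tail)

theorem GlueChain.exists_fin {a b : Σ i, X i} {L : ℝ≥0∞} (h : GlueChain j a b L) :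
    ∃ (n : ℕ) (idx : Fin (n + 1) → I) (p q : ∀ s, X (idx s)),
      (⟨idx 0, p 0⟩ : Σ i, X i) = a ∧
      (⟨idx (Fin.last n), q (Fin.last n)⟩ : Σ i, X i) = b ∧
      (∀ s : Fin n, ∃ y : Y,
        q s.castSucc = j (idx s.castSucc) y ∧ p s.succ = j (idx s.succ) y) ∧
      L = ∑ s, edist (p s) (q s) := by
  induction h with
  | single i x x' =>
    exact ⟨0, fun _ => i, fun _ => x, fun _ => x', rfl, rfl, nofun, by simp⟩
  | cons i x y _ ih =>
    obtain ⟨n, idx, p, q, hstart, hend, hlink, rfl⟩ := ih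
    obtain ⟨rfl, hp⟩ := Sigma.mk.inj_iff.mp hstart
    let idx' : Fin (n + 2) → I := Fin.cons i idx
    refine ⟨n + 1, idx', Fin.cases (motive := fun s => X (idx' s)) x p,
      Fin.cases (motive := fun s => X (idx' s)) (j i y) q, ?_, ?_, ?_, ?_⟩
    · rfl
    · exact hend
    · exact Fin.cases ⟨y, rfl, eq_of_heq hp⟩ hlink
    · rw [Fin.sum_univ_succ (n := n + 1)]
      rfl

theorem glueDist_eq_sInf (a b : Σ i, X i) :
    glueDist j a b = sInf {L | GlueChain j a b L} := by
  unfold glueDist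
  congr 1
  ext L
  constructor
  · rintro ⟨n, idx, p, q, rfl, rfl, hlink, rfl⟩
    exact .of_fin n idx p q hlink
  · exact GlueChain.exists_fin

end GlueChain

namespace GlueChain

variable {I Y : Type*} {X : I → Type*} [∀ i, EMetricSpace (X i)] {j : ∀ i, Y → X i}
  {a b c : Σ i, X i} {L L₁ L₂ : ℝ≥0∞}

theorem glueDist_le (h : GlueChain j a b L) : glueDist j a b ≤ L := by
  rw [glueDist_eq_sInf]
  exact sInf_le h

theorem le_glueDist {r : ℝ≥0∞} (h : ∀ L, GlueChain j a b L → r ≤ L) :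
    r ≤ glueDist j a b := by
  rw [glueDist_eq_sInf]
  exact le_sInf h

theorem exists_lt_of_glueDist_lt {r : ℝ≥0∞} (h : glueDist j a b < r) :
    ∃ L < r, GlueChain j a b L := by
  rw [glueDist_eq_sInf] at h
  obtain ⟨L, hL, hLr⟩ := sInf_lt_iff.mp h
  exact ⟨L, hLr, hL⟩

theorem move_start {i : I} {x : X i} (h : GlueChain j ⟨i, x⟩ b L) (x₀ : X i) :
    ∃ L' ≤ edist x₀ x + L, GlueChain j ⟨i, x₀⟩ b L' := by
  cases h with
  | single _ _ x' => exact ⟨_, edist_triangle _ _ _, single i x₀ x'⟩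
  | cons _ _ y h =>
    refine ⟨_, ?_, cons i x₀ y h⟩
    rw [← add_assoc]
    gcongr
    exact edist_triangle _ _ _

theorem trans (h₁ : GlueChain j a c L₁) (h₂ : GlueChain j c b L₂) :
    ∃ L ≤ L₁ + L₂, GlueChain j a b L := by
  induction h₁ with
  | single _ x => exact h₂.move_start x
  | cons i x y h ih =>
    obtain ⟨L, hL, hchain⟩ := ih h₂
    refine ⟨_, ?_, cons i x y hchain⟩
    rw [add_assoc]
    gcongr

theorem symm (h : GlueChain j a b L) : ∃ L' ≤ L, GlueChain j b a L' := by
  induction h with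
  | single i x x' => exact ⟨_, (edist_comm _ _).le, single i x' x⟩
  | @cons i x y i' b L h ih =>
    obtain ⟨L', hL', hchain⟩ := ih
    obtain ⟨L'', hL'', hchain'⟩ := hchain.trans (cons i' (j i' y) y (single i (j i y) x))
    refine ⟨L'', hL''.trans ?_, hchain'⟩
    rw [edist_self, zero_add, add_comm, edist_comm]
    gcongr

theorem eq_or_glueDist_le {i : I} {x : X i} (h : GlueChain j ⟨i, x⟩ b L) :
    (∃ x', b = ⟨i, x'⟩ ∧ edist x x' ≤ L) ∨
      ∃ i' y, glueDist j ⟨i, x⟩ ⟨i', j i' y⟩ ≤ L := by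
  cases h with
  | single _ _ x' => exact .inl ⟨x', rfl, le_rfl⟩
  | cons _ _ y h => exact .inr ⟨i, y, (single i x (j i y)).glueDist_le.trans le_self_add⟩

theorem mul_edist_le [EMetricSpace Y] {C : ℝ≥0}
    (hexp : ∀ (i : I) (y y' : Y), (C : ℝ≥0∞) * edist y y' ≤ edist (j i y) (j i y'))
    {i i' : I} {y y' : Y} (h : GlueChain j ⟨i, j i y⟩ ⟨i', j i' y'⟩ L) :
    C * edist y y' ≤ L := by
  generalize ha : (⟨i, j i y⟩ : Σ i, X i) = a at h
  generalize hb : (⟨i', j i' y'⟩ : Σ i, X i) = b at h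
  induction h generalizing i y with
  | single =>
    cases ha
    cases hb
    exact hexp _ y y'
  | cons i₀ x y₀ h ih =>
    cases ha
    calc (C : ℝ≥0∞) * edist y y'
        ≤ C * edist y y₀ + C * edist y₀ y' := by
          rw [← mul_add]; gcongr; exact edist_triangle _ _ _
      _ ≤ edist (j i₀ y) (j i₀ y₀) + _ := add_le_add (hexp i₀ y y₀) (ih rfl hb)

end GlueChain

section GlueSpace

variable {I Y : Type*} {X : I → Type*} [∀ i, EMetricSpace (X i)] (j : ∀ i, Y → X i)

theorem glueDist_comm (a b : Σ i, X i) : glueDist j a b = glueDist j b a := by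
  suffices ∀ a b, glueDist j b a ≤ glueDist j a b from le_antisymm (this b a) (this a b)
  refine fun a b => GlueChain.le_glueDist fun L h => ?_
  obtain ⟨L', hL', h'⟩ := h.symm
  exact h'.glueDist_le.trans hL'

theorem glueDist_triangle (a b c : Σ i, X i) :
    glueDist j a c ≤ glueDist j a b + glueDist j b c := by
  rw [glueDist_eq_sInf a b, glueDist_eq_sInf b c, ENNReal.sInf_add]
  refine le_iInf₂ fun L₁ h₁ => ?_
  rw [add_comm, ENNReal.sInf_add]
  refine le_iInf₂ fun L₂ h₂ => ?_
  obtain ⟨L, hL, h⟩ := h₁.trans h₂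
  exact h.glueDist_le.trans (hL.trans_eq (add_comm _ _))

/-- The glued space before identifying points at distance zero, which does not affect
completeness; `j` is a parameter only so that the metric instance can depend on it. -/
def GlueSpace (_j : ∀ i, Y → X i) : Type _ := Σ i, X i

noncomputable instance : PseudoEMetricSpace (GlueSpace j) where
  edist := glueDist j
  edist_self a :=
    nonpos_iff_eq_zero.1 <| (GlueChain.single a.1 a.2 a.2).glueDist_le.trans_eq (edist_self _)
  edist_comm := glueDist_comm j
  edist_triangle := glueDist_triangle j

namespace GlueSpace

def incl (i : I) (x : X i) : GlueSpace j := ⟨i, x⟩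

variable {j}

theorem edist_incl_incl (i i' : I) (x : X i) (x' : X i') :
    edist (incl j i x) (incl j i' x') = glueDist j ⟨i, x⟩ ⟨i', x'⟩ :=
  rfl

theorem lipschitzWith_incl (i : I) : LipschitzWith 1 (incl j i) :=
  LipschitzWith.of_edist_le fun x x' => (GlueChain.single i x x').glueDist_le

theorem edist_incl_incl_eq_zero (i i' : I) (y : Y) :
    edist (incl j i (j i y)) (incl j i' (j i' y)) = 0 :=
  nonpos_iff_eq_zero.1 <|
    (GlueChain.cons i (j i y) y (.single i' (j i' y) (j i' y))).glueDist_le.trans_eq (by simp)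

end GlueSpace

end GlueSpace

namespace GlueSpace

variable {I Y : Type*} {X : I → Type*} [∀ i, EMetricSpace (X i)] {j : ∀ i, Y → X i}

theorem mul_edist_le_edist_incl [EMetricSpace Y] {C : ℝ≥0}
    (hexp : ∀ (i : I) (y y' : Y), (C : ℝ≥0∞) * edist y y' ≤ edist (j i y) (j i y'))
    (i i' : I) (y y' : Y) :
    C * edist y y' ≤ edist (incl j i (j i y)) (incl j i' (j i' y')) := by
  rw [edist_incl_incl]
  exact GlueChain.le_glueDist fun L h => h.mul_edist_le hexp

theorem isComplete_range_incl_comp [EMetricSpace Y] [CompleteSpace Y] {C : ℝ≥0} (hC0 : 0 < C)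
    (hexp : ∀ (i : I) (y y' : Y), (C : ℝ≥0∞) * edist y y' ≤ edist (j i y) (j i y'))
    {i : I} (hne : LipschitzWith 1 (j i)) : IsComplete (range (incl j i ∘ j i)) := by
  have hanti : AntilipschitzWith C⁻¹ (incl j i ∘ j i) := fun y y' => by
    have hC : (C : ℝ≥0∞) ≠ 0 := ENNReal.coe_ne_zero.2 hC0.ne'
    rw [ENNReal.coe_inv hC0.ne', ← ENNReal.div_eq_inv_mul,
      ENNReal.le_div_iff_mul_le (.inl hC) (.inl ENNReal.coe_ne_top), mul_comm]
    exact mul_edist_le_edist_incl hexp i i y y'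
  exact hanti.isComplete_range ((lipschitzWith_incl i).comp hne).uniformContinuous

theorem exists_eq_incl_of_edist_lt {i : I} {x : X i} {b : GlueSpace j} {r : ℝ≥0∞}
    (hb : edist (incl j i x) b < r)
    (hfar : ∀ i' y, r ≤ edist (incl j i x) (incl j i' (j i' y))) :
    ∃ x', b = incl j i x' ∧ edist x x' ≤ edist (incl j i x) b := by
  have hshort : ∀ L < r, GlueChain j ⟨i, x⟩ b L →
      ∃ x', b = incl j i x' ∧ edist x x' ≤ L := by
    intro L hL h
    refine h.eq_or_glueDist_le.resolve_right ?_
    rintro ⟨i', y, hy⟩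
    exact (hy.trans_lt hL).not_ge (hfar i' y)
  obtain ⟨L₀, hL₀, h₀⟩ := GlueChain.exists_lt_of_glueDist_lt hb
  obtain ⟨x', rfl, hx'⟩ := hshort L₀ hL₀ h₀
  refine ⟨x', rfl, ?_⟩
  rw [edist_incl_incl]
  refine GlueChain.le_glueDist fun L h => ?_
  rcases lt_or_ge L r with hL | hL
  · obtain ⟨x'', hx'', hle⟩ := hshort L hL h
    cases hx''
    exact hle
  · exact hx'.trans (hL₀.le.trans hL)

theorem exists_tendsto_of_eventually_far [∀ i, CompleteSpace (X i)] {u : ℕ → GlueSpace j}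
    (hu : CauchySeq u) {r : ℝ≥0∞} (hr : 0 < r)
    (hfar : ∀ᶠ n in atTop, ∀ i y, r ≤ edist (u n) (incl j i (j i y))) :
    ∃ a, Tendsto u atTop (𝓝 a) := by
  obtain ⟨N₁, hN₁⟩ := eventually_atTop.1 hfar
  obtain ⟨N₂, hN₂⟩ := EMetric.cauchySeq_iff.1 hu r hr
  set N := max N₁ N₂
  have hstep : ∀ m ≥ N, ∀ n ≥ N, ∀ i x, u m = incl j i x →
      ∃ x', u n = incl j i x' ∧ edist x x' ≤ edist (u m) (u n) := by
    intro m hm n hn i x hx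
    have hclose := hN₂ m (le_of_max_le_right hm) n (le_of_max_le_right hn)
    have hfar_m := hN₁ m (le_of_max_le_left hm)
    rw [hx] at hclose hfar_m ⊢
    exact exists_eq_incl_of_edist_lt hclose hfar_m
  obtain ⟨i, x₀, hx₀⟩ : ∃ i x, u N = incl j i x := ⟨_, _, rfl⟩
  have : Nonempty (X i) := ⟨x₀⟩
  choose! v hv using fun n (hn : N ≤ n) =>
    (hstep N le_rfl n hn i x₀ hx₀).imp fun _ => And.left
  have hvu : ∀ m ≥ N, ∀ n ≥ N, edist (v m) (v n) ≤ edist (u m) (u n) := by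
    intro m hm n hn
    obtain ⟨x', hx', hle⟩ := hstep m hm n hn i (v m) (hv m hm)
    rwa [sigma_mk_injective ((hv n hn).symm.trans hx')]
  have hv_cauchy : CauchySeq v := EMetric.cauchySeq_iff.2 fun δ hδ => by
    obtain ⟨M, hM⟩ := EMetric.cauchySeq_iff.1 hu δ hδ
    refine ⟨max M N, fun m hm n hn => ?_⟩
    exact (hvu m (le_of_max_le_right hm) n (le_of_max_le_right hn)).trans_lt
      (hM m (le_of_max_le_left hm) n (le_of_max_le_left hn))
  obtain ⟨x, hx⟩ := cauchySeq_tendsto_of_complete hv_cauchy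
  refine ⟨incl j i x, (((lipschitzWith_incl i).continuous.tendsto x).comp hx).congr' ?_⟩
  filter_upwards [eventually_ge_atTop N] with n hn using (hv n hn).symm

theorem completeSpace [EMetricSpace Y] [CompleteSpace Y] [∀ i, CompleteSpace (X i)] {C : ℝ≥0}
    (hC0 : 0 < C) (hne : ∀ i, LipschitzWith 1 (j i))
    (hexp : ∀ (i : I) (y y' : Y), (C : ℝ≥0∞) * edist y y' ≤ edist (j i y) (j i y')) :
    CompleteSpace (GlueSpace j) := by
  refine EMetric.complete_of_cauchySeq_tendsto fun u hu => ?_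
  by_cases hfar : ∃ r > 0, ∀ᶠ n in atTop, ∀ i y, r ≤ edist (u n) (incl j i (j i y))
  · obtain ⟨r, hr, hfar⟩ := hfar
    exact exists_tendsto_of_eventually_far hu hr hfar
  push Not at hfar
  let i₀ := (u 0).1
  refine (isComplete_range_incl_comp hC0 hexp (hne i₀)).exists_tendsto_of_frequently_edist_lt hu
    fun ε hε => (hfar ε hε).mono ?_
  rintro n ⟨i, y, hy⟩
  refine ⟨_, mem_range_self y, ?_⟩
  rwa [Function.comp_apply, edist_congr_left (edist_incl_incl_eq_zero i₀ i y)]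

end GlueSpace

theorem glue_complete {I Y : Type*} {X : I → Type*}
    [EMetricSpace Y] [CompleteSpace Y]
    [∀ i, EMetricSpace (X i)] [∀ i, CompleteSpace (X i)]
    (C : ℝ≥0) (hC0 : 0 < C)
    (j : ∀ i, Y → X i)
    (hne : ∀ i, LipschitzWith 1 (j i))
    (hexp : ∀ (i : I) (y y' : Y), (C : ℝ≥0∞) * edist y y' ≤ edist (j i y) (j i y')) :
    ∀ u : ℕ → Σ i, X i,
      (∀ ε : ℝ≥0∞, 0 < ε → ∃ N : ℕ, ∀ m n : ℕ, N ≤ m → N ≤ n →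
        glueDist j (u m) (u n) < ε) →
      ∃ a : Σ i, X i,
        Filter.Tendsto (fun n => glueDist j (u n) a) Filter.atTop (nhds 0) := by
  intro u hcau
  have := GlueSpace.completeSpace hC0 hne hexp
  have hu : CauchySeq (α := GlueSpace j) u :=
    EMetric.cauchySeq_iff.2 fun ε hε => (hcau ε hε).imp fun _ hN m hm n hn => hN m n hm hn
  obtain ⟨a, ha⟩ := cauchySeq_tendsto_of_complete hu
  exact ⟨a, tendsto_iff_edist_tendsto_0.1 ha⟩
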